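/- arXiv:2312.04658 — 3 statements merged into one kernel-verified Lean document; each statement's English description precedes it below -/
import Mathlib

section
/- Let (Ω, ℱ, ν) be a probability space, Θ a measurable parameter space with prior probability measure P, and let N ≥ 2 and 1 ≤ k ≤ N be integers; set a := (k−1)/(N−1). Let L : Θ × Ω → [0,1] be jointly measurable such that for every θ ∈ Θ the law of ω ↦ L(θ, ω) under ν is the Beta distribution with parameters (k, N+1−k). Then for every δ ∈ (0,1), with ν-probability at least 1 − δ over ω, simultaneously for all probability measures Q on Θ: (N−1) · kl( a ‖ ∫_Θ L(θ, ω) dQ(θ) ) ≤ KL(Q‖P) + log(B/δ), where B := a^{k−1} (1−a)^{N−k} · N! / ((k−1)! (N−k)!) is the density of the Beta(k, N+1−k) distribution evaluated at a. -/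
/-!
For `x ∈ (0, 1)` the identity `exp ((N - 1) kl(a‖x)) · x^(k-1) (1-x)^(N-k) = a^(k-1) (1-a)^(N-k)`
makes `exp ((N - 1) kl(a‖x))` cancel the Beta(k, N+1-k) density up to the constant `B`, so its
`ν`-mean is exactly `B` for every `θ`. By Fubini and Markov, with probability at least `1 - δ`
the prior mean `∫ exp ((N - 1) kl(a‖L(θ, ω))) dP(θ)` is at most `B / δ`. On that event apply the
Donsker–Varadhan inequality to the tangent line of the convex function `(N - 1) kl(a‖·)` at the
posterior mean `∫ L(θ, ω) dQ(θ)`: it minorizes `(N - 1) kl(a‖L(θ, ω))` and its `Q`-mean is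
`(N - 1) kl(a‖∫ L dQ)`. Being affine in `L`, it is integrable under every `Q`, which Jensen's
inequality applied to `kl(a‖L)` itself would not guarantee.
-/

open MeasureTheory Real

/-- KL divergence between Bernoulli distributions with success probabilities `p` and `q`
(with the convention `0 * log 0 = 0`, which holds for `Real.log`). -/
noncomputable def bernKL (p q : ℝ) : ℝ :=
  p * Real.log (p / q) + (1 - p) * Real.log ((1 - p) / (1 - q))

open Classical in
/-- Kullback-Leibler divergence between measures: `∫ log (dQ/dP) dQ` when `Q ≪ P`
(and the log-likelihood ratio is integrable), `+∞` otherwise. -/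
noncomputable def klDivE {Θ : Type*} [MeasurableSpace Θ] (Q P : Measure Θ) : EReal :=
  if Q ≪ P ∧ Integrable (llr Q P) Q then ((∫ θ, llr Q P θ ∂Q : ℝ) : EReal) else ⊤

/-- The Beta distribution with integer parameters `(k, N + 1 - k)`, with density
`x^(k-1) (1-x)^(N-k) · N! / ((k-1)! (N-k)!)` on `(0, 1)`. -/
noncomputable def betaIntMeasure (N k : ℕ) : Measure ℝ :=
  volume.withDensity fun x =>
    ENNReal.ofReal <|
      if x ∈ Set.Ioo (0 : ℝ) 1 then
        x ^ (k - 1) * (1 - x) ^ (N - k) *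
          ((N.factorial : ℝ) / ((k - 1).factorial * (N - k).factorial))
      else 0

theorem mul_log_div_add_le_mul_log_div {p s t : ℝ} (hp : 0 ≤ p) (hs : 0 < s) (ht : 0 < t) :
    p * log (p / t) + p / t * (t - s) ≤ p * log (p / s) := by
  rcases hp.eq_or_lt with rfl | hp
  · simp
  have key : 1 - s / t ≤ log (t / s) := by
    simpa using one_sub_inv_le_log_of_pos (div_pos ht hs)
  have hlog : log (p / s) = log (p / t) + log (t / s) := by
    rw [← log_mul (by positivity) (by positivity)]
    field_simp
  rw [hlog, mul_add]
  have : p / t * (t - s) = p * (1 - s / t) := by field_simp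
  nlinarith

theorem bernKL_add_mul_sub_le {a m x : ℝ} (ha : a ∈ Set.Icc (0 : ℝ) 1)
    (hm : m ∈ Set.Ioo (0 : ℝ) 1) (hx : x ∈ Set.Ioo (0 : ℝ) 1) :
    bernKL a m + (-(a / m) + (1 - a) / (1 - m)) * (x - m) ≤ bernKL a x := by
  obtain ⟨ha0, ha1⟩ := ha
  obtain ⟨hm0, hm1⟩ := hm
  obtain ⟨hx0, hx1⟩ := hx
  have h₁ := mul_log_div_add_le_mul_log_div ha0 hx0 hm0
  have h₂ := mul_log_div_add_le_mul_log_div (sub_nonneg.2 ha1) (sub_pos.2 hx1) (sub_pos.2 hm1)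
  unfold bernKL
  linarith

@[fun_prop]
theorem measurable_bernKL (a : ℝ) : Measurable (bernKL a) := by
  unfold bernKL
  fun_prop

theorem exp_natCast_mul_log {n : ℕ} {y : ℝ} (h : n = 0 ∨ 0 < y) :
    exp (n * log y) = y ^ n := by
  rcases h with rfl | hy
  · simp
  · rw [exp_nat_mul, exp_log hy]

theorem exp_mul_bernKL_mul_pow (i j : ℕ) {x : ℝ} (hx : x ∈ Set.Ioo (0 : ℝ) 1) :
    exp ((i + j) * bernKL (i / (i + j)) x) * (x ^ i * (1 - x) ^ j) =
      (i / (i + j) : ℝ) ^ i * (1 - i / (i + j)) ^ j := by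
  obtain ⟨hx0, hx1⟩ := hx
  set a : ℝ := i / (i + j)
  have hsplit : (i + j) * bernKL a x = i * log (a / x) + j * log ((1 - a) / (1 - x)) := by
    rcases Nat.eq_zero_or_pos (i + j) with h | h
    · obtain ⟨rfl, rfl⟩ := Nat.add_eq_zero_iff.1 h
      simp
    · have : (0 : ℝ) < i + j := by exact_mod_cast h
      unfold bernKL a
      field_simp
      ring
  have hi : i = 0 ∨ 0 < a / x := by
    rcases Nat.eq_zero_or_pos i with h | h
    · exact .inl h
    · exact .inr (by positivity)
  have hj : j = 0 ∨ 0 < (1 - a) / (1 - x) := by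
    rcases Nat.eq_zero_or_pos j with h | h
    · exact .inl h
    · refine .inr (div_pos ?_ (sub_pos.2 hx1))
      rw [sub_pos, div_lt_one (by positivity)]
      exact_mod_cast Nat.lt_add_of_pos_right h
  clear_value a
  rw [hsplit, exp_add, exp_natCast_mul_log hi, exp_natCast_mul_log hj, div_pow, div_pow]
  have : x ^ i ≠ 0 := by positivity
  have : (1 - x) ^ j ≠ 0 := pow_ne_zero _ (sub_pos.2 hx1).ne'
  field_simp

open scoped Nat in
noncomputable def betaIntDensity (N k : ℕ) (x : ℝ) : ℝ :=
  x ^ (k - 1) * (1 - x) ^ (N - k) * ((N ! : ℝ) / ((k - 1)! * (N - k)!))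

theorem betaIntMeasure_eq_withDensity (N k : ℕ) :
    betaIntMeasure N k =
      (volume.restrict (Set.Ioo (0 : ℝ) 1)).withDensity
        fun x ↦ ENNReal.ofReal (betaIntDensity N k x) := by
  rw [betaIntMeasure, ← withDensity_indicator measurableSet_Ioo]
  congr with x
  by_cases hx : x ∈ Set.Ioo (0 : ℝ) 1 <;> simp [hx, betaIntDensity]

theorem betaIntDensity_pos {N k : ℕ} {x : ℝ} (hx : x ∈ Set.Ioo (0 : ℝ) 1) :
    0 < betaIntDensity N k x := by
  have := sub_pos.2 hx.2
  have := hx.1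
  unfold betaIntDensity
  positivity

theorem betaIntDensity_mul_exp_bernKL {N k : ℕ} (hk1 : 1 ≤ k) (hkN : k ≤ N) {x : ℝ}
    (hx : x ∈ Set.Ioo (0 : ℝ) 1) :
    betaIntDensity N k x * exp ((N - 1) * bernKL ((k - 1) / (N - 1)) x) =
      betaIntDensity N k ((k - 1) / (N - 1)) := by
  have hi : ((k - 1 : ℕ) : ℝ) = k - 1 := by push_cast [Nat.cast_sub hk1]; ring
  have hij : ((k - 1 : ℕ) : ℝ) + (N - k : ℕ) = N - 1 := by
    push_cast [Nat.cast_sub hk1, Nat.cast_sub hkN]; ring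
  have key := exp_mul_bernKL_mul_pow (k - 1) (N - k) hx
  rw [hij, hi] at key
  unfold betaIntDensity
  rw [← key]
  ring

theorem sub_one_div_sub_one_mem_Icc {N k : ℕ} (hk1 : 1 ≤ k) (hkN : k ≤ N) :
    ((k : ℝ) - 1) / (N - 1) ∈ Set.Icc (0 : ℝ) 1 := by
  have hk : (0 : ℝ) ≤ k - 1 := sub_nonneg.2 (by exact_mod_cast hk1)
  have hkN' : (k : ℝ) - 1 ≤ N - 1 := by gcongr
  exact ⟨div_nonneg hk (hk.trans hkN'), div_le_one_of_le₀ hkN' (hk.trans hkN')⟩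

theorem betaIntDensity_sub_one_div_sub_one_pos {N k : ℕ} (hk1 : 1 ≤ k) (hkN : k ≤ N) :
    0 < betaIntDensity N k ((k - 1) / (N - 1)) := by
  rw [← betaIntDensity_mul_exp_bernKL hk1 hkN (x := 1 / 2) (by norm_num)]
  exact mul_pos (betaIntDensity_pos (by norm_num)) (exp_pos _)

theorem lintegral_betaIntMeasure_exp_bernKL {N k : ℕ} (hk1 : 1 ≤ k) (hkN : k ≤ N) :
    ∫⁻ x, ENNReal.ofReal (exp ((N - 1) * bernKL ((k - 1) / (N - 1)) x)) ∂betaIntMeasure N k =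
      ENNReal.ofReal (betaIntDensity N k ((k - 1) / (N - 1))) := by
  rw [betaIntMeasure_eq_withDensity, lintegral_withDensity_eq_lintegral_mul _
    (by unfold betaIntDensity; fun_prop) (by fun_prop)]
  calc _ = ∫⁻ _ in Set.Ioo (0 : ℝ) 1,
        ENNReal.ofReal (betaIntDensity N k ((k - 1) / (N - 1))) := by
        refine setLIntegral_congr_fun measurableSet_Ioo fun x hx ↦ ?_
        rw [Pi.mul_apply, ← ENNReal.ofReal_mul (betaIntDensity_pos hx).le,
          betaIntDensity_mul_exp_bernKL hk1 hkN hx]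
    _ = _ := by simp

theorem ae_betaIntMeasure_mem_Ioo (N k : ℕ) :
    ∀ᵐ x ∂betaIntMeasure N k, x ∈ Set.Ioo (0 : ℝ) 1 := by
  rw [betaIntMeasure_eq_withDensity]
  exact withDensity_absolutelyContinuous _ _ |>.ae_le (ae_restrict_mem measurableSet_Ioo)

section Integral

variable {α : Type*} [MeasurableSpace α] {μ : Measure α}

theorem integral_pos_of_ae_pos [NeZero μ] {f : α → ℝ} (hf : Integrable f μ)
    (hpos : ∀ᵐ x ∂μ, 0 < f x) : 0 < ∫ x, f x ∂μ := by
  rw [integral_pos_iff_support_of_nonneg_ae (hpos.mono fun _ ↦ le_of_lt) hf,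
    pos_iff_ne_zero]
  intro hzero
  rw [Function.support, ← ae_iff] at hzero
  obtain ⟨x, hx0, hxpos⟩ := (hzero.and hpos).exists
  exact hxpos.ne' hx0

theorem integral_mem_Ioo_of_ae_mem_Ioo [IsProbabilityMeasure μ] {f : α → ℝ}
    (hf : Integrable f μ) (hmem : ∀ᵐ x ∂μ, f x ∈ Set.Ioo (0 : ℝ) 1) :
    ∫ x, f x ∂μ ∈ Set.Ioo (0 : ℝ) 1 := by
  refine ⟨integral_pos_of_ae_pos hf (hmem.mono fun _ hx ↦ hx.1), ?_⟩
  have := integral_pos_of_ae_pos ((integrable_const 1).sub hf)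
    (hmem.mono fun _ hx ↦ sub_pos.2 hx.2)
  rw [integral_sub' (integrable_const 1) hf] at this
  simpa using this

end Integral

/-- Donsker–Varadhan: `KL(Q‖P_f) = KL(Q‖P) - 𝔼_Q f + log 𝔼_P e^f` for the tilted measure
`P_f ∝ e^f P`, and Gibbs' inequality makes it nonnegative. -/
theorem integral_le_integral_llr_add_log_integral_exp {Θ : Type*} [MeasurableSpace Θ]
    {Q P : Measure Θ} [IsProbabilityMeasure Q] [IsProbabilityMeasure P] (hQP : Q ≪ P)
    (hllr : Integrable (llr Q P) Q) {f : Θ → ℝ} (hfQ : Integrable f Q)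
    (hfP : Integrable (fun θ ↦ exp (f θ)) P) :
    ∫ θ, f θ ∂Q ≤ ∫ θ, llr Q P θ ∂Q + log (∫ θ, exp (f θ) ∂P) := by
  have := isProbabilityMeasure_tilted hfP
  have hgibbs := InformationTheory.integral_llr_add_sub_measure_univ_nonneg
    (hQP.trans (absolutelyContinuous_tilted hfP)) (integrable_llr_tilted_right hQP hfQ hllr hfP)
  rw [integral_llr_tilted_right hQP hfQ hfP hllr] at hgibbs
  simp only [probReal_univ] at hgibbs
  linarith

theorem integral_le_integral_llr_add_log_of_lintegral_exp_le {Θ : Type*} [MeasurableSpace Θ]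
    {Q P : Measure Θ} [IsProbabilityMeasure Q] [IsProbabilityMeasure P] (hQP : Q ≪ P)
    (hllr : Integrable (llr Q P) Q) {f : Θ → ℝ} (hf : Measurable f) (hfQ : Integrable f Q)
    {R : ℝ} (hR : 0 < R) (hexp : ∫⁻ θ, ENNReal.ofReal (exp (f θ)) ∂P ≤ ENNReal.ofReal R) :
    ∫ θ, f θ ∂Q ≤ ∫ θ, llr Q P θ ∂Q + log R := by
  have hexp_nonneg : 0 ≤ᵐ[P] fun θ ↦ exp (f θ) := ae_of_all _ fun _ ↦ (exp_pos _).le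
  have hfP : Integrable (fun θ ↦ exp (f θ)) P :=
    ⟨hf.exp.aestronglyMeasurable, (hasFiniteIntegral_iff_ofReal hexp_nonneg).2
      (hexp.trans_lt ENNReal.ofReal_lt_top)⟩
  have hfR : ∫ θ, exp (f θ) ∂P ≤ R := by
    rw [integral_eq_lintegral_of_nonneg_ae hexp_nonneg hfP.aestronglyMeasurable]
    exact ENNReal.toReal_le_of_le_ofReal hR.le hexp
  calc ∫ θ, f θ ∂Q ≤ ∫ θ, llr Q P θ ∂Q + log (∫ θ, exp (f θ) ∂P) :=
        integral_le_integral_llr_add_log_integral_exp hQP hllr hfQ hfP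
    _ ≤ ∫ θ, llr Q P θ ∂Q + log R := by gcongr; exact integral_exp_pos hfP

theorem mul_bernKL_integral_le_klDivE_add_log {Θ : Type*} [MeasurableSpace Θ]
    {P : Measure Θ} [IsProbabilityMeasure P] {ℓ : Θ → ℝ} (hℓ : Measurable ℓ)
    (hℓP : ∀ᵐ θ ∂P, ℓ θ ∈ Set.Ioo (0 : ℝ) 1) {a c R : ℝ} (ha : a ∈ Set.Icc (0 : ℝ) 1)
    (hc : 0 ≤ c) (hR : 0 < R)
    (hexp : ∫⁻ θ, ENNReal.ofReal (exp (c * bernKL a (ℓ θ))) ∂P ≤ ENNReal.ofReal R)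
    (Q : Measure Θ) [IsProbabilityMeasure Q] :
    ((c * bernKL a (∫ θ, ℓ θ ∂Q) : ℝ) : EReal) ≤ klDivE Q P + (log R : EReal) := by
  unfold klDivE
  split_ifs with hQP
  swap
  · simp
  obtain ⟨hQP, hllr⟩ := hQP
  have hℓQ : ∀ᵐ θ ∂Q, ℓ θ ∈ Set.Ioo (0 : ℝ) 1 := hQP.ae_le hℓP
  have hℓQint : Integrable ℓ Q := Integrable.of_bound hℓ.aestronglyMeasurable 1 <|
    hℓQ.mono fun θ hθ ↦ by rw [norm_eq_abs, abs_le]; constructor <;> linarith [hθ.1, hθ.2]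
  set m := ∫ θ, ℓ θ ∂Q
  have hm : m ∈ Set.Ioo (0 : ℝ) 1 := integral_mem_Ioo_of_ae_mem_Ioo hℓQint hℓQ
  set s := -(a / m) + (1 - a) / (1 - m)
  set g : Θ → ℝ := fun θ ↦ c * (bernKL a m + s * (ℓ θ - m))
  have hlin : Integrable (fun θ ↦ s * (ℓ θ - m)) Q :=
    (hℓQint.sub (integrable_const m)).const_mul s
  have hgQint : Integrable g Q := ((integrable_const _).add hlin).const_mul c
  have hgQ : ∫ θ, g θ ∂Q = c * bernKL a m := by
    have hmean : ∫ θ, (ℓ θ - m) ∂Q = 0 := by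
      rw [integral_sub hℓQint (integrable_const m)]
      simp [m]
    rw [integral_const_mul, integral_add (integrable_const _) hlin, integral_const_mul, hmean]
    simp
  have hg_le : ∀ᵐ θ ∂P, exp (g θ) ≤ exp (c * bernKL a (ℓ θ)) := by
    filter_upwards [hℓP] with θ hθ
    exact exp_le_exp.2 (mul_le_mul_of_nonneg_left (bernKL_add_mul_sub_le ha hm hθ) hc)
  have hexpg : ∫⁻ θ, ENNReal.ofReal (exp (g θ)) ∂P ≤ ENNReal.ofReal R :=
    (lintegral_mono_ae (hg_le.mono fun _ h ↦ ENNReal.ofReal_le_ofReal h)).trans hexp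
  rw [← EReal.coe_add, EReal.coe_le_coe_iff, ← hgQ]
  exact integral_le_integral_llr_add_log_of_lintegral_exp_le hQP hllr (by fun_prop) hgQint hR
    hexpg

theorem ofReal_one_sub_le_measure_lintegral_le {Ω Θ : Type*} [MeasurableSpace Ω]
    [MeasurableSpace Θ] (ν : Measure Ω) [IsProbabilityMeasure ν] (P : Measure Θ)
    [IsProbabilityMeasure P] {F : Θ → Ω → ENNReal} (hF : Measurable (Function.uncurry F))
    {c δ : ℝ} (hc : 0 < c) (hδ : 0 < δ) (hFc : ∀ θ, ∫⁻ ω, F θ ω ∂ν ≤ ENNReal.ofReal c) :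
    ENNReal.ofReal (1 - δ) ≤ ν {ω | ∫⁻ θ, F θ ω ∂P ≤ ENNReal.ofReal (c / δ)} := by
  set G : Ω → ENNReal := fun ω ↦ ∫⁻ θ, F θ ω ∂P
  have hG : Measurable G := hF.lintegral_prod_left'
  have hmean : ∫⁻ ω, G ω ∂ν ≤ ENNReal.ofReal c := by
    have hF' : Measurable (Function.uncurry fun ω θ ↦ F θ ω) := hF.comp measurable_swap
    rw [lintegral_lintegral_swap hF'.aemeasurable]
    calc ∫⁻ θ, ∫⁻ ω, F θ ω ∂ν ∂P ≤ ∫⁻ _, ENNReal.ofReal c ∂P := lintegral_mono hFc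
      _ = ENNReal.ofReal c := by simp
  have hmarkov : ν {ω | ENNReal.ofReal (c / δ) ≤ G ω} ≤ ENNReal.ofReal δ :=
    calc ν {ω | ENNReal.ofReal (c / δ) ≤ G ω}
        ≤ (∫⁻ ω, G ω ∂ν) / ENNReal.ofReal (c / δ) := meas_ge_le_lintegral_div hG.aemeasurable
          (ENNReal.ofReal_pos.2 (div_pos hc hδ)).ne' ENNReal.ofReal_ne_top
      _ ≤ ENNReal.ofReal c / ENNReal.ofReal (c / δ) := by gcongr
      _ = ENNReal.ofReal δ := by
        rw [← ENNReal.ofReal_div_of_pos (div_pos hc hδ)]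
        congr 1
        field_simp
  calc ENNReal.ofReal (1 - δ) = 1 - ENNReal.ofReal δ := by
        rw [ENNReal.ofReal_sub _ hδ.le, ENNReal.ofReal_one]
    _ ≤ 1 - ν {ω | ENNReal.ofReal (c / δ) ≤ G ω} := tsub_le_tsub_left hmarkov 1
    _ = ν {ω | ENNReal.ofReal (c / δ) ≤ G ω}ᶜ :=
        (prob_compl_eq_one_sub (measurableSet_le measurable_const hG)).symm
    _ ≤ ν {ω | G ω ≤ ENNReal.ofReal (c / δ)} :=
        measure_mono fun ω (h : ¬_ ≤ G ω) ↦ le_of_not_ge h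

theorem pac_bayes_beta_miscoverage_bound_general
    {Ω Θ : Type*} [MeasurableSpace Ω] [MeasurableSpace Θ]
    (ν : Measure Ω) [IsProbabilityMeasure ν]
    (P : Measure Θ) [IsProbabilityMeasure P]
    (N k : ℕ) (hk1 : 1 ≤ k) (hkN : k ≤ N)
    (a : ℝ) (ha : a = ((k : ℝ) - 1) / ((N : ℝ) - 1))
    (L : Θ → Ω → ℝ) (hL : Measurable (Function.uncurry L))
    (hBeta : ∀ θ : Θ, ν.map (L θ) = betaIntMeasure N k)
    (δ : ℝ) (hδ : δ ∈ Set.Ioo (0 : ℝ) 1)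
    (B : ℝ)
    (hB : B = a ^ (k - 1) * (1 - a) ^ (N - k) *
      ((N.factorial : ℝ) / ((k - 1).factorial * (N - k).factorial))) :
    ENNReal.ofReal (1 - δ) ≤
      ν {ω | ∀ Q : Measure Θ, IsProbabilityMeasure Q →
        ((((N : ℝ) - 1) * bernKL a (∫ θ, L θ ω ∂Q) : ℝ) : EReal) ≤
          klDivE Q P + (Real.log (B / δ) : EReal)} := by
  replace hB : B = betaIntDensity N k a := hB
  have hBpos : 0 < B := hB ▸ ha ▸ betaIntDensity_sub_one_div_sub_one_pos hk1 hkN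
  have hN1 : (0 : ℝ) ≤ N - 1 := sub_nonneg.2 (by exact_mod_cast hk1.trans hkN)
  have hLθ : ∀ θ, Measurable (L θ) := fun θ ↦ hL.comp measurable_prodMk_left
  have hmoment : ∀ θ, ∫⁻ ω, ENNReal.ofReal (exp ((N - 1) * bernKL a (L θ ω))) ∂ν ≤
      ENNReal.ofReal B := fun θ ↦ le_of_eq <| by
    rw [hB, ha, ← lintegral_betaIntMeasure_exp_bernKL hk1 hkN, ← hBeta θ,
      lintegral_map (by fun_prop) (hLθ θ)]
  have hsupport : ∀ᵐ ω ∂ν, ∀ᵐ θ ∂P, L θ ω ∈ Set.Ioo (0 : ℝ) 1 := by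
    refine (Measure.ae_ae_comm (p := fun θ ω ↦ L θ ω ∈ Set.Ioo (0 : ℝ) 1)
      (hL measurableSet_Ioo)).1 (ae_of_all _ fun θ ↦ ?_)
    refine ae_of_ae_map (hLθ θ).aemeasurable ?_
    rw [hBeta]
    exact ae_betaIntMeasure_mem_Ioo N k
  refine (ofReal_one_sub_le_measure_lintegral_le ν P (by fun_prop) hBpos hδ.1 hmoment).trans
    (measure_mono_ae ?_)
  filter_upwards [hsupport] with ω hω hbound Q _
  exact mul_bernKL_integral_le_klDivE_add_log (hL.comp measurable_prodMk_right) hω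
    (ha ▸ sub_one_div_sub_one_mem_Icc hk1 hkN) hN1 (div_pos hBpos hδ.1) hbound Q

/-- Abstract form of the PAC-Bayes coverage bound (Theorem 1): uniform-over-posteriors
bound for Beta-distributed miscoverages. -/
theorem pac_bayes_beta_miscoverage_bound
    {Ω Θ : Type*} [MeasurableSpace Ω] [MeasurableSpace Θ]
    (ν : Measure Ω) [IsProbabilityMeasure ν]
    (P : Measure Θ) [IsProbabilityMeasure P]
    (N k : ℕ) (hN : 2 ≤ N) (hk1 : 1 ≤ k) (hkN : k ≤ N)
    (a : ℝ) (ha : a = ((k : ℝ) - 1) / ((N : ℝ) - 1))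
    (L : Θ → Ω → ℝ) (hL : Measurable (Function.uncurry L))
    (hL01 : ∀ θ ω, L θ ω ∈ Set.Icc (0 : ℝ) 1)
    (hBeta : ∀ θ : Θ, ν.map (L θ) = betaIntMeasure N k)
    (δ : ℝ) (hδ : δ ∈ Set.Ioo (0 : ℝ) 1)
    (B : ℝ)
    (hB : B = a ^ (k - 1) * (1 - a) ^ (N - k) *
      ((N.factorial : ℝ) / ((k - 1).factorial * (N - k).factorial))) :
    ENNReal.ofReal (1 - δ) ≤
      ν {ω | ∀ Q : Measure Θ, IsProbabilityMeasure Q →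
        ((((N : ℝ) - 1) * bernKL a (∫ θ, L θ ω ∂Q) : ℝ) : EReal) ≤
          klDivE Q P + (Real.log (B / δ) : EReal)} :=
  pac_bayes_beta_miscoverage_bound_general ν P N k hk1 hkN a ha L hL hBeta δ hδ B hB
end

section
/- Let N and k be integers with 1 < k < N, and set a := (k−1)/(N−1). Then a^{k−1} (1−a)^{N−k} · N! / ((k−1)! (N−k)!) < N · √(N−1) / √( 2π (k−1)(N−k) ). -/
/-!
Write `n! = s n · √(2n) (n/e)^n` with `s` the Stirling sequence, which decreases strictly
to `√π`. Setting `m = k - 1`, `n = N - k`, the left-hand side is `N` times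
`(m/(m+n))^m (n/(m+n))^n (m+n)!/(m! n!)`; after the powers of `e` cancel this equals
`√((m+n)/(2mn)) · s (m+n) / (s m · s n)`, and `s (m+n) ≤ s m`, `s n > √π` finish the bound.
-/

open Real
open Nat hiding log

namespace Stirling

theorem stirlingSeq_succ_lt {n : ℕ} (hn : n ≠ 0) : stirlingSeq (n + 1) < stirlingSeq n := by
  obtain ⟨n, rfl⟩ := exists_eq_succ_of_ne_zero hn
  have hlog := log_stirlingSeq_sdiff_hasSum n
  have hpos : 0 < log (stirlingSeq (n + 1)) - log (stirlingSeq (n + 2)) :=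
    hasSum_lt (i := 0) (fun _ => by positivity) (by positivity) hasSum_zero hlog
  exact (log_lt_log_iff (stirlingSeq'_pos _) (stirlingSeq'_pos _)).mp (by linarith)

theorem sqrt_pi_lt_stirlingSeq {n : ℕ} (hn : n ≠ 0) : √π < stirlingSeq n :=
  (sqrt_pi_le_stirlingSeq n.succ_ne_zero).trans_lt (stirlingSeq_succ_lt hn)

theorem lt_factorial_stirling {n : ℕ} (hn : n ≠ 0) : √(2 * π * n) * (n / exp 1) ^ n < n ! := by
  have hsplit : √(2 * π * n) * (n / exp 1) ^ n = √π * (√(2 * n) * (n / exp 1) ^ n) := by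
    simp [sqrt_mul']; ring
  have hn' : (0 : ℝ) < n := by positivity
  rw [hsplit, ← lt_div_iff₀ (by positivity)]
  exact sqrt_pi_lt_stirlingSeq hn

theorem stirlingSeq_add_le {m : ℕ} (n : ℕ) (hm : m ≠ 0) :
    stirlingSeq (m + n) ≤ stirlingSeq m := by
  obtain ⟨m, rfl⟩ := Nat.exists_eq_succ_of_ne_zero hm
  rw [Nat.succ_add]
  exact stirlingSeq'_antitone (Nat.le_add_right m n)

theorem factorial_add_mul_le {m : ℕ} (n : ℕ) (hm : m ≠ 0) :
    ((m + n)! : ℝ) * (√m * (m / exp 1) ^ m) ≤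
      m ! * (√((m : ℝ) + n) * (((m : ℝ) + n) / exp 1) ^ (m + n)) := by
  have h := stirlingSeq_add_le n hm
  have hm' : (0 : ℝ) < m := by positivity
  simp only [stirlingSeq, cast_add, sqrt_mul zero_le_two] at h
  rwa [div_le_div_iff₀ (by positivity) (by positivity), mul_assoc √2, mul_assoc √2,
    mul_left_comm _ √2, mul_left_comm _ √2, mul_le_mul_iff_right₀ (by positivity)] at h

end Stirling

open Stirling in
theorem pow_mul_pow_mul_factorial_div_lt_sqrt {m n : ℕ} (hm : m ≠ 0) (hn : n ≠ 0) :
    ((m : ℝ) / (m + n)) ^ m * ((n : ℝ) / (m + n)) ^ n * ((m + n)! / (m ! * n !)) <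
      √((m + n) / (2 * π * m * n)) := by
  have hm' : (0 : ℝ) < m := by positivity
  have hn' : (0 : ℝ) < n := by positivity
  set e := exp 1
  set s : ℝ := m + n
  have he : 0 < e := exp_pos 1
  have hs : 0 < s := by positivity
  calc ((m : ℝ) / s) ^ m * ((n : ℝ) / s) ^ n * ((m + n)! / (m ! * n !))
      = (m + n)! * (√m * (m / e) ^ m) * (n / e) ^ n /
          (√m * (s / e) ^ (m + n) * (m ! * n !)) := by
        rw [div_pow, div_pow, div_pow, div_pow, div_pow, pow_add, pow_add]
        field_simp
    _ ≤ m ! * (√s * (s / e) ^ (m + n)) * (n / e) ^ n /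
          (√m * (s / e) ^ (m + n) * (m ! * n !)) := by
        gcongr ?_ * _ / _
        exact factorial_add_mul_le n hm
    _ = √s / √m * ((n / e) ^ n / n !) := by
        field_simp
    _ < √s / √m * (1 / √(2 * π * n)) := by
        gcongr √s / √m * ?_
        rw [div_lt_div_iff₀ (by positivity) (by positivity), one_mul, mul_comm]
        exact lt_factorial_stirling hn
    _ = √(s / (2 * π * m * n)) := by
        rw [show 2 * π * m * n = m * (2 * π * n) by ring, sqrt_div' _ (by positivity),
          sqrt_mul hm'.le]
        field_simp

/-- The Stirling-type upper bound on the constant `B(N)`: the `Beta(k, N+1-k)` density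
evaluated at `a = (k-1)/(N-1)` is less than `N √(N-1) / √(2π (k-1)(N-k))`. -/
theorem betaDensity_lt_stirling_bound
    (N k : ℕ) (hk : 1 < k) (hkN : k < N)
    (a : ℝ) (ha : a = ((k : ℝ) - 1) / ((N : ℝ) - 1)) :
    a ^ (k - 1) * (1 - a) ^ (N - k) *
        ((N.factorial : ℝ) / ((k - 1).factorial * (N - k).factorial)) <
      (N : ℝ) * Real.sqrt ((N : ℝ) - 1) /
        Real.sqrt (2 * Real.pi * ((k : ℝ) - 1) * ((N : ℝ) - (k : ℝ))) := by
  obtain ⟨m, n, hm, hn, rfl, rfl⟩ : ∃ m n, m ≠ 0 ∧ n ≠ 0 ∧ k = m + 1 ∧ N = m + n + 1 :=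
    ⟨k - 1, N - k, by omega, by omega, by omega, by omega⟩
  have ha_m : a = m / (m + n) := by rw [ha]; push_cast; ring_nf
  have ha_n : 1 - a = n / (m + n) := by rw [ha_m]; field_simp; ring
  rw [ha_n, ha_m, show m + 1 - 1 = m by omega, show m + n + 1 - (m + 1) = n by omega,
    factorial_succ]
  push_cast
  calc _ = (m + n + 1) *
        (((m : ℝ) / (m + n)) ^ m * ((n : ℝ) / (m + n)) ^ n * ((m + n)! / (m ! * n !))) := by
        ring
    _ < (m + n + 1) * √((m + n) / (2 * π * m * n)) := by
        gcongr
        exact pow_mul_pow_mul_factorial_div_lt_sqrt hm hn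
    _ = _ := by
        rw [sqrt_div' _ (by positivity)]
        ring_nf
end

section
/- Let (Z, 𝒵) be a measurable space with probability measure μ, Θ a measurable parameter space, β > 0, and g : Z × [0, β] × Θ → [0, 1] jointly measurable with τ ↦ g(z, τ, θ) continuous for every z and θ. For an integer N ≥ 2 and D = (z₁,…,z_N) ∈ Z^N, define R̂(θ, D) := sup_{τ ∈ [0,β]} | (1/N) Σ_{i=1}^N g(z_i, τ, θ) − ∫_Z g(z, τ, θ) dμ(z) | and R(θ) := E_{D ∼ μ^N}[R̂(θ, D)], where the coordinates of D are i.i.d. with law μ. Then for every θ ∈ Θ, E_{D ∼ μ^N}[ exp( 2(N−1) · (R̂(θ, D) − R(θ))² ) ] ≤ 2N. -/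
open MeasureTheory Real

/-- The worst-case (over the threshold `τ ∈ [0, β]`) absolute gap between the empirical
mean efficiency of the `θ`-parameterized prediction sets on the sample `D` and their
expected efficiency under `μ`. -/
noncomputable def RhatP {Z Θ : Type*} [MeasurableSpace Z] (μ : Measure Z) (β : ℝ)
    (g : Z → ℝ → Θ → ℝ) {N : ℕ} (θ : Θ) (D : Fin N → Z) : ℝ :=
  ⨆ τ : Set.Icc (0 : ℝ) β,
    |(1 / (N : ℝ)) * ∑ i, g (D i) τ θ - ∫ z, g z τ θ ∂μ|

/-- The expectation of the worst-case gap over the sampling of the dataset `D ~ μ^N`. -/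
noncomputable def RexpP {Z Θ : Type*} [MeasurableSpace Z] (μ : Measure Z) (β : ℝ)
    (g : Z → ℝ → Θ → ℝ) (N : ℕ) (θ : Θ) : ℝ :=
  ∫ D, RhatP μ β g θ D ∂(Measure.pi fun _ : Fin N => μ)

open ProbabilityTheory
open scoped NNReal

/-!
`R̂(θ, ·)` takes values in `[0, 1]` and moves by at most `1 / N` when one sample point is
replaced. Integrating out one coordinate at a time and applying Hoeffding's lemma to it
(McDiarmid's argument) shows that `R̂ - R` has a sub-Gaussian moment generating function with
variance proxy `N (1 / (2N))² = 1 / (4N)`. For such a variable `X` with proxy `c`, writing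
`exp (a X²)` as the Gaussian average of `exp (√(2a) X t)` over `t` and exchanging the integrals
gives `E exp (a X²) ≤ (1 - 2ac)^(-1/2)`; for `a = 2(N - 1)` this is `√N ≤ 2N`.
-/

lemma lintegral_exp_neg_mul_sq_add_mul {b : ℝ} (hb : 0 < b) (s : ℝ) :
    ∫⁻ t, ENNReal.ofReal (exp (-b * t ^ 2 + s * t)) =
      ENNReal.ofReal (exp (s ^ 2 / (4 * b)) * √(π / b)) := by
  have hsq : ∀ t, exp (-b * t ^ 2 + s * t) =
      exp (s ^ 2 / (4 * b)) * exp (-b * (t - s / (2 * b)) ^ 2) := by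
    intro t
    rw [← exp_add]
    congr 1
    field_simp
    ring
  simp_rw [hsq, ENNReal.ofReal_mul (exp_pos _).le]
  rw [lintegral_const_mul' _ _ ENNReal.ofReal_ne_top,
    lintegral_sub_right_eq_self (fun t => ENNReal.ofReal (exp (-b * t ^ 2))),
    ← ofReal_integral_eq_lintegral_ofReal (integrable_exp_neg_mul_sq hb)
      (ae_of_all _ fun _ => (exp_pos _).le), integral_gaussian]

namespace ProbabilityTheory.HasSubgaussianMGF

variable {Ω : Type*} [MeasurableSpace Ω] {μ : Measure Ω} {X : Ω → ℝ} {c : ℝ≥0}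

lemma lintegral_exp_mul_le (h : HasSubgaussianMGF X c μ) (t : ℝ) :
    ∫⁻ ω, ENNReal.ofReal (exp (t * X ω)) ∂μ ≤ ENNReal.ofReal (exp (c * t ^ 2 / 2)) := by
  rw [← ofReal_integral_eq_lintegral_ofReal (h.integrable_exp_mul t)
    (ae_of_all _ fun _ => (exp_pos _).le)]
  exact ENNReal.ofReal_le_ofReal (h.mgf_le t)

lemma of_lintegral_exp_mul_le (hX : AEMeasurable X μ)
    (h : ∀ t, ∫⁻ ω, ENNReal.ofReal (exp (t * X ω)) ∂μ ≤ ENNReal.ofReal (exp (c * t ^ 2 / 2))) :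
    HasSubgaussianMGF X c μ where
  integrable_exp_mul t :=
    ⟨(hX.const_mul t).exp.aestronglyMeasurable, (hasFiniteIntegral_iff_ofReal
      (ae_of_all _ fun _ => (exp_pos _).le)).2 ((h t).trans_lt ENNReal.ofReal_lt_top)⟩
  mgf_le t := by
    rw [mgf, integral_eq_lintegral_of_nonneg_ae (ae_of_all _ fun _ => (exp_pos _).le)
      (hX.const_mul t).exp.aestronglyMeasurable]
    exact ENNReal.toReal_le_of_le_ofReal (exp_pos _).le (h t)

lemma map_iff {Ω' : Type*} [MeasurableSpace Ω'] {Y : Ω' → Ω} {ν : Measure Ω'}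
    (hY : AEMeasurable Y ν) (hX : AEMeasurable X (ν.map Y)) :
    HasSubgaussianMGF X c (ν.map Y) ↔ HasSubgaussianMGF (X ∘ Y) c ν := by
  rw [← id_map_iff hX, ← id_map_iff (hX.comp_aemeasurable hY),
    AEMeasurable.map_map_of_aemeasurable hX hY]

lemma of_prod {Ω' : Type*} [MeasurableSpace Ω'] {ν : Measure Ω'} [SFinite μ] [SFinite ν]
    {X : Ω × Ω' → ℝ} {G : Ω' → ℝ} {c₁ c₂ : ℝ≥0} (hX : AEMeasurable X (μ.prod ν))
    (h₁ : ∀ y, HasSubgaussianMGF (fun x => X (x, y) - G y) c₁ μ)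
    (h₂ : HasSubgaussianMGF G c₂ ν) :
    HasSubgaussianMGF X (c₁ + c₂) (μ.prod ν) := by
  refine of_lintegral_exp_mul_le hX fun t => ?_
  have hsplit : ∀ x y, ENNReal.ofReal (exp (t * X (x, y))) =
      ENNReal.ofReal (exp (t * (X (x, y) - G y))) * ENNReal.ofReal (exp (t * G y)) := by
    intro x y
    rw [← ENNReal.ofReal_mul (exp_pos _).le, ← exp_add]
    ring_nf
  calc ∫⁻ p, ENNReal.ofReal (exp (t * X p)) ∂(μ.prod ν)
      = ∫⁻ y, (∫⁻ x, ENNReal.ofReal (exp (t * (X (x, y) - G y))) ∂μ) *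
          ENNReal.ofReal (exp (t * G y)) ∂ν := by
        rw [lintegral_prod_symm _ (hX.const_mul t).exp.ennreal_ofReal]
        simp_rw [hsplit, lintegral_mul_const' _ _ ENNReal.ofReal_ne_top]
    _ ≤ ∫⁻ y, ENNReal.ofReal (exp (c₁ * t ^ 2 / 2)) * ENNReal.ofReal (exp (t * G y)) ∂ν := by
        gcongr with y
        exact (h₁ y).lintegral_exp_mul_le t
    _ ≤ ENNReal.ofReal (exp (c₁ * t ^ 2 / 2)) * ENNReal.ofReal (exp (c₂ * t ^ 2 / 2)) := by
        rw [lintegral_const_mul' _ _ ENNReal.ofReal_ne_top]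
        gcongr
        exact h₂.lintegral_exp_mul_le t
    _ = ENNReal.ofReal (exp (↑(c₁ + c₂) * t ^ 2 / 2)) := by
        rw [← ENNReal.ofReal_mul (exp_pos _).le, ← exp_add]
        push_cast
        ring_nf

lemma lintegral_exp_mul_sq_le [SFinite μ] (h : HasSubgaussianMGF X c μ) {a : ℝ} (ha : 0 ≤ a)
    (hac : 2 * a * c < 1) :
    ∫⁻ ω, ENNReal.ofReal (exp (a * X ω ^ 2)) ∂μ ≤ ENNReal.ofReal (√(1 - 2 * a * c))⁻¹ := by
  set u := √(2 * a)
  have hu : u ^ 2 = 2 * a := sq_sqrt (by linarith)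
  have hlin : ∀ x, ENNReal.ofReal (exp (a * x ^ 2)) = ENNReal.ofReal (√(2 * π))⁻¹ *
      ∫⁻ t, ENNReal.ofReal (exp (-(1 / 2) * t ^ 2 + u * x * t)) := by
    intro x
    rw [lintegral_exp_neg_mul_sq_add_mul (by norm_num), ← ENNReal.ofReal_mul (by positivity),
      show π / (1 / 2) = 2 * π by ring, mul_pow, hu, mul_left_comm,
      inv_mul_cancel₀ (by positivity)]
    ring_nf
  have hX : AEMeasurable (fun p : Ω × ℝ => X p.1) (μ.prod volume) := h.aemeasurable.comp_fst
  calc ∫⁻ ω, ENNReal.ofReal (exp (a * X ω ^ 2)) ∂μ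
      = ENNReal.ofReal (√(2 * π))⁻¹ * ∫⁻ t, ∫⁻ ω,
          ENNReal.ofReal (exp (-(1 / 2) * t ^ 2)) * ENNReal.ofReal (exp (u * t * X ω)) ∂μ := by
        simp_rw [hlin]
        rw [lintegral_const_mul' _ _ ENNReal.ofReal_ne_top, lintegral_lintegral_swap
          (((measurable_snd.pow_const 2).const_mul _).aemeasurable.add
            ((hX.const_mul u).mul measurable_snd.aemeasurable)).exp.ennreal_ofReal]
        refine congrArg _ (lintegral_congr fun t => lintegral_congr fun ω => ?_)
        rw [← ENNReal.ofReal_mul (exp_pos _).le, ← exp_add]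
        ring_nf
    _ ≤ ENNReal.ofReal (√(2 * π))⁻¹ * ∫⁻ t,
          ENNReal.ofReal (exp (-(1 / 2) * t ^ 2)) * ENNReal.ofReal (exp (c * (u * t) ^ 2 / 2)) := by
        gcongr with t
        rw [lintegral_const_mul' _ _ ENNReal.ofReal_ne_top]
        gcongr
        exact h.lintegral_exp_mul_le _
    _ = ENNReal.ofReal (√(2 * π))⁻¹ * ∫⁻ t,
          ENNReal.ofReal (exp (-((1 - 2 * a * c) / 2) * t ^ 2 + 0 * t)) := by
        refine congrArg _ (lintegral_congr fun t => ?_)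
        rw [← ENNReal.ofReal_mul (exp_pos _).le, ← exp_add, mul_pow, hu]
        ring_nf
    _ = ENNReal.ofReal (√(1 - 2 * a * c))⁻¹ := by
        rw [lintegral_exp_neg_mul_sq_add_mul (by linarith), ← ENNReal.ofReal_mul (by positivity)]
        congr 1
        rw [show π / ((1 - 2 * a * c) / 2) = 2 * π / (1 - 2 * a * c) by field_simp,
          sqrt_div' _ (by linarith)]
        field_simp
        simp

end ProbabilityTheory.HasSubgaussianMGF

lemma hasSubgaussianMGF_of_sub_le {Ω : Type*} [MeasurableSpace Ω] {μ : Measure Ω}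
    [IsProbabilityMeasure μ] {X : Ω → ℝ} {c : ℝ≥0} (hX : AEMeasurable X μ)
    (h : ∀ ω ω', X ω - X ω' ≤ c) :
    HasSubgaussianMGF (fun ω => X ω - μ[X]) ((c / 2) ^ 2) μ := by
  have hΩ := nonempty_of_isProbabilityMeasure μ
  have hbdd : BddBelow (Set.range X) :=
    ⟨X hΩ.some - c, Set.forall_mem_range.2 fun ω => by linarith [h hΩ.some ω]⟩
  have hmem : ∀ ω, X ω ∈ Set.Icc (⨅ ω', X ω') ((⨅ ω', X ω') + c) := fun ω =>
    ⟨ciInf_le hbdd ω, by linarith [le_ciInf fun ω' => (sub_le_comm.1 (h ω ω'))]⟩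
  simpa using hasSubgaussianMGF_of_mem_Icc hX (ae_of_all _ hmem)

section Product

variable {Z : Type*} [MeasurableSpace Z]

lemma measurePreserving_cons (μ : Measure Z) [SigmaFinite μ] (n : ℕ) :
    MeasurePreserving (fun p : Z × (Fin n → Z) => (Fin.cons p.1 p.2 : Fin (n + 1) → Z))
      (μ.prod (Measure.pi fun _ => μ)) (Measure.pi fun _ => μ) := by
  convert (measurePreserving_piFinSuccAbove (fun _ : Fin (n + 1) => μ) 0).symm using 1
  ext p : 1
  simp [Fin.insertNthEquiv]

lemma measurable_fin_cons {n : ℕ} (x : Fin n → Z) :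
    Measurable fun z : Z => (Fin.cons z x : Fin (n + 1) → Z) :=
  measurable_pi_iff.2 fun j => Fin.cases measurable_id (fun _ => measurable_const) j

lemma integral_pi_succ (μ : Measure Z) [SigmaFinite μ] {n : ℕ} {f : (Fin (n + 1) → Z) → ℝ}
    (hf : Integrable f (Measure.pi fun _ => μ)) :
    ∫ D, f D ∂Measure.pi (fun _ => μ) =
      ∫ x, ∫ z, f (Fin.cons z x) ∂μ ∂Measure.pi (fun _ : Fin n => μ) := by
  have hcons := measurePreserving_cons μ n
  rw [← hcons.map_eq, integral_map hcons.measurable.aemeasurable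
    (hcons.map_eq ▸ hf.aestronglyMeasurable)]
  exact integral_prod_symm _ (hcons.integrable_comp_of_integrable hf)

lemma hasSubgaussianMGF_sub_integral_pi_succ (μ : Measure Z) [IsProbabilityMeasure μ]
    {c c' : ℝ≥0} {C : ℝ} {n : ℕ} {f : (Fin (n + 1) → Z) → ℝ} (hf : Measurable f)
    (hfC : ∀ D, |f D| ≤ C) (hfc : ∀ D z, f D - f (Function.update D 0 z) ≤ c)
    (hF : HasSubgaussianMGF (fun x => ∫ z, f (Fin.cons z x) ∂μ -
      ∫ x', ∫ z, f (Fin.cons z x') ∂μ ∂Measure.pi (fun _ => μ)) c' (Measure.pi fun _ => μ)) :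
    HasSubgaussianMGF (fun D => f D - ∫ D', f D' ∂Measure.pi fun _ => μ) ((c / 2) ^ 2 + c')
      (Measure.pi fun _ => μ) := by
  have hcons := measurePreserving_cons μ n
  have hint : Integrable f (Measure.pi fun _ => μ) :=
    .of_bound hf.aestronglyMeasurable C (ae_of_all _ fun _ => hfC _)
  set E := ∫ D, f D ∂Measure.pi fun _ => μ
  rw [← integral_pi_succ μ hint] at hF
  have hfiber : ∀ x, HasSubgaussianMGF (fun z => (f (Fin.cons z x) - E) -
      (∫ z', f (Fin.cons z' x) ∂μ - E)) ((c / 2) ^ 2) μ := by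
    intro x
    simp only [sub_sub_sub_cancel_right]
    exact hasSubgaussianMGF_of_sub_le (hf.comp (measurable_fin_cons x)).aemeasurable
      fun z z' => by simpa [Fin.update_cons_zero] using hfc (Fin.cons z x) z'
  rw [← hcons.map_eq, HasSubgaussianMGF.map_iff hcons.measurable.aemeasurable
    (hcons.map_eq ▸ (hf.sub_const E).aemeasurable)]
  exact .of_prod ((hf.comp hcons.measurable).sub_const E).aemeasurable hfiber hF

theorem hasSubgaussianMGF_sub_integral_pi_of_sub_update_le (μ : Measure Z)
    [IsProbabilityMeasure μ] {c : ℝ≥0} {C : ℝ} (n : ℕ) {f : (Fin n → Z) → ℝ} (hf : Measurable f)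
    (hfC : ∀ D, |f D| ≤ C) (hfc : ∀ D i z, f D - f (Function.update D i z) ≤ c) :
    HasSubgaussianMGF (fun D => f D - ∫ D', f D' ∂Measure.pi fun _ => μ) (n * (c / 2) ^ 2)
      (Measure.pi fun _ => μ) := by
  induction n with
  | zero =>
    have hzero : (fun D => f D - ∫ D', f D' ∂Measure.pi fun _ => μ) = 0 := by
      funext D
      simp [integral_unique, Subsingleton.elim D default]
    simp [hzero]
  | succ n ih =>
    have hsec : ∀ x, Integrable (fun z => f (Fin.cons z x)) μ := fun x =>
      .of_bound (hf.comp (measurable_fin_cons x)).aestronglyMeasurable C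
        (ae_of_all _ fun _ => hfC _)
    have hFC : ∀ x, |∫ z, f (Fin.cons z x) ∂μ| ≤ C := fun x => by
      simpa using norm_integral_le_of_norm_le_const (μ := μ) (f := fun z => f (Fin.cons z x))
        (ae_of_all _ fun z => hfC _)
    have hFc : ∀ x i w, ∫ z, f (Fin.cons z x) ∂μ -
        ∫ z, f (Fin.cons z (Function.update x i w)) ∂μ ≤ c := by
      intro x i w
      rw [← integral_sub (hsec x) (hsec _)]
      calc ∫ z, f (Fin.cons z x) - f (Fin.cons z (Function.update x i w)) ∂μ
          ≤ ∫ _, (c : ℝ) ∂μ := integral_mono ((hsec x).sub (hsec _)) (integrable_const _)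
            fun z => by simpa [Fin.cons_update] using hfc (Fin.cons z x) i.succ w
        _ = c := by simp
    have hF_meas : Measurable fun x => ∫ z, f (Fin.cons z x) ∂μ :=
      (hf.comp (measurePreserving_cons μ n).measurable).stronglyMeasurable.integral_prod_left'
        |>.measurable
    rw [show ((n + 1 : ℕ) : ℝ≥0) * (c / 2) ^ 2 = (c / 2) ^ 2 + n * (c / 2) ^ 2 by push_cast; ring]
    exact hasSubgaussianMGF_sub_integral_pi_succ μ hf hfC (fun D => hfc D 0) (ih hF_meas hFC hFc)

end Product

lemma measurable_ciSup_of_continuous {ι δ : Type*} [TopologicalSpace ι]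
    [TopologicalSpace.SeparableSpace ι] [MeasurableSpace δ] {f : ι → δ → ℝ}
    (hf : ∀ i, Measurable (f i)) (hc : ∀ x, Continuous fun i => f i x) :
    Measurable fun x => ⨆ i, f i x := by
  obtain ⟨S, hS, hdense⟩ := TopologicalSpace.exists_countable_dense ι
  have := hS.to_subtype
  simp_rw [← hdense.ciSup' (hc _)]
  exact Measurable.iSup fun s => hf s

section EmpiricalMean

variable {Z : Type*} {N : ℕ} {φ : Z → ℝ}

lemma abs_mean_sub_integral_le_one [MeasurableSpace Z] (μ : Measure Z) [IsProbabilityMeasure μ]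
    (hφ : ∀ z, φ z ∈ Set.Icc (0 : ℝ) 1) (D : Fin N → Z) :
    |(1 / (N : ℝ)) * ∑ i, φ (D i) - ∫ z, φ z ∂μ| ≤ 1 := by
  refine abs_sub_le_of_nonneg_of_le
    (mul_nonneg (by positivity) (Finset.sum_nonneg fun i _ => (hφ (D i)).1)) ?_
    (integral_nonneg fun z => (hφ z).1) ?_
  · rw [one_div_mul_eq_div]
    exact div_le_one_of_le₀ ((Finset.sum_le_sum fun i _ => (hφ (D i)).2).trans (by simp))
      (Nat.cast_nonneg _)
  · simpa using integral_mono_of_nonneg (ae_of_all μ fun z => (hφ z).1) (integrable_const 1)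
      (ae_of_all _ fun z => (hφ z).2)

lemma abs_mean_update_sub_mean_le (hφ : ∀ z, φ z ∈ Set.Icc (0 : ℝ) 1) (D : Fin N → Z)
    (i : Fin N) (z : Z) :
    |(1 / (N : ℝ)) * ∑ j, φ (Function.update D i z j) - (1 / (N : ℝ)) * ∑ j, φ (D j)| ≤
      1 / N := by
  have hsum : ∑ j, φ (Function.update D i z j) - ∑ j, φ (D j) = φ z - φ (D i) := by
    change ∑ j, (φ ∘ Function.update D i z) j - _ = _
    rw [Function.comp_update, Finset.sum_update_of_mem (Finset.mem_univ i),
      Finset.sum_eq_add_sum_sdiff_singleton_of_mem (Finset.mem_univ i)]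
    simp only [Function.comp_apply]
    ring
  rw [← mul_sub, hsum, abs_mul, abs_of_nonneg (by positivity)]
  exact mul_le_of_le_one_right (by positivity)
    (abs_sub_le_of_nonneg_of_le (hφ z).1 (hφ z).2 (hφ (D i)).1 (hφ (D i)).2)

end EmpiricalMean

section Rhat

variable {Z Θ : Type*} [MeasurableSpace Z] (μ : Measure Z)
  [IsProbabilityMeasure μ] {β : ℝ} {g : Z → ℝ → Θ → ℝ}
  (hg01 : ∀ z θ, ∀ τ ∈ Set.Icc 0 β, g z τ θ ∈ Set.Icc (0 : ℝ) 1) {N : ℕ} (θ : Θ)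

include hg01

lemma abs_RhatP_le_one (D : Fin N → Z) : |RhatP μ β g θ D| ≤ 1 := by
  rw [RhatP, abs_of_nonneg (Real.iSup_nonneg fun _ => abs_nonneg _)]
  exact Real.iSup_le (fun τ => abs_mean_sub_integral_le_one μ (fun z => hg01 z θ τ τ.2) D)
    zero_le_one

lemma RhatP_sub_RhatP_update_le (D : Fin N → Z) (i : Fin N) (z : Z) :
    RhatP μ β g θ D - RhatP μ β g θ (Function.update D i z) ≤ 1 / N := by
  have hbdd : BddAbove (Set.range fun τ : Set.Icc (0 : ℝ) β =>
      |(1 / (N : ℝ)) * ∑ j, g (Function.update D i z j) τ θ - ∫ z, g z τ θ ∂μ|) :=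
    ⟨1, Set.forall_mem_range.2 fun τ =>
      abs_mean_sub_integral_le_one μ (fun z => hg01 z θ τ τ.2) _⟩
  rw [sub_le_iff_le_add, RhatP]
  refine Real.iSup_le (fun τ => ?_)
    (add_nonneg (by positivity) (Real.iSup_nonneg fun _ => abs_nonneg _))
  calc |(1 / (N : ℝ)) * ∑ j, g (D j) τ θ - ∫ z, g z τ θ ∂μ|
      ≤ |(1 / (N : ℝ)) * ∑ j, g (D j) τ θ -
            (1 / (N : ℝ)) * ∑ j, g (Function.update D i z j) τ θ| +
          |(1 / (N : ℝ)) * ∑ j, g (Function.update D i z j) τ θ - ∫ z, g z τ θ ∂μ| :=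
        abs_sub_le _ _ _
    _ ≤ 1 / N + RhatP μ β g θ (Function.update D i z) := by
        rw [abs_sub_comm]
        exact add_le_add (abs_mean_update_sub_mean_le (fun z => hg01 z θ τ τ.2) D i z)
          (le_ciSup hbdd τ)

lemma measurable_RhatP [MeasurableSpace Θ]
    (hg : Measurable fun p : Z × ℝ × Θ => g p.1 p.2.1 p.2.2)
    (hgc : ∀ z θ, ContinuousOn (fun τ => g z τ θ) (Set.Icc 0 β)) :
    Measurable fun D : Fin N → Z => RhatP μ β g θ D := by
  have hslice : ∀ τ, Measurable fun z => g z τ θ := fun τ =>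
    hg.comp (measurable_prodMk_right (y := (τ, θ)))
  refine measurable_ciSup_of_continuous (fun τ => ?_) (fun D => ?_)
  · exact ((Finset.measurable_sum _ fun i _ => (hslice τ).comp (measurable_pi_apply i)).const_mul
      _ |>.sub_const _).abs
  · refine ContinuousOn.domRestrict (s := Set.Icc 0 β)
      (f := fun τ => |(1 / (N : ℝ)) * ∑ i, g (D i) τ θ - ∫ z, g z τ θ ∂μ|) (.abs ?_)
    refine (continuousOn_const.mul (continuousOn_finsetSum _ fun i _ => hgc (D i) θ)).sub ?_
    refine continuousOn_of_dominated (bound := fun _ => 1)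
      (fun τ _ => (hslice τ).aestronglyMeasurable) (fun τ hτ => ae_of_all _ fun z => ?_)
      (integrable_const 1) (ae_of_all _ fun z => hgc z θ)
    rw [Real.norm_eq_abs, abs_of_nonneg (hg01 z θ τ hτ).1]
    exact (hg01 z θ τ hτ).2

end Rhat

theorem exp_moment_Rhat_deviation_general
    {Z Θ : Type*} [MeasurableSpace Z] [MeasurableSpace Θ]
    (μ : Measure Z) [IsProbabilityMeasure μ]
    (β : ℝ)
    (g : Z → ℝ → Θ → ℝ)
    (hg : Measurable fun p : Z × ℝ × Θ => g p.1 p.2.1 p.2.2)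
    (hg01 : ∀ z θ, ∀ τ ∈ Set.Icc 0 β, g z τ θ ∈ Set.Icc (0 : ℝ) 1)
    (hgc : ∀ z θ, ContinuousOn (fun τ => g z τ θ) (Set.Icc 0 β))
    (N : ℕ) (hN : 2 ≤ N) :
    ∀ θ : Θ,
      ∫⁻ D, ENNReal.ofReal
          (Real.exp (2 * ((N : ℝ) - 1) * (RhatP μ β g θ D - RexpP μ β g N θ) ^ 2))
          ∂(Measure.pi fun _ : Fin N => μ) ≤
        ENNReal.ofReal (2 * (N : ℝ)) := by
  intro θ
  have hN1 : (1 : ℝ) ≤ N := by exact_mod_cast one_le_two.trans hN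
  have hsub := hasSubgaussianMGF_sub_integral_pi_of_sub_update_le μ (c := (N : ℝ≥0)⁻¹) N
    (measurable_RhatP μ hg01 θ hg hgc) (abs_RhatP_le_one μ hg01 θ)
    fun D i z => by simpa using RhatP_sub_RhatP_update_le μ hg01 θ D i z
  have hc :
      1 - 2 * (2 * ((N : ℝ) - 1)) * ((N * ((N : ℝ≥0)⁻¹ / 2) ^ 2 : ℝ≥0) : ℝ) = 1 / N := by
    have : (N : ℝ) ≠ 0 := by positivity
    push_cast
    field_simp
    ring
  have hc_pos : (0 : ℝ) < 1 / N := by positivity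
  refine (hsub.lintegral_exp_mul_sq_le (by linarith) (by linarith)).trans
    (ENNReal.ofReal_le_ofReal ?_)
  rw [hc, one_div, sqrt_inv, inv_inv]
  linarith [sqrt_le_self_iff.2 (Or.inr hN1)]

/-- Exponential moment bound for the deviation of the worst-case empirical-vs-expected
efficiency gap from its mean: `E_{D ~ μ^N}[exp(2(N-1)(R̂(θ,D) - R(θ))²)] ≤ 2N`. -/
theorem exp_moment_Rhat_deviation
    {Z Θ : Type*} [MeasurableSpace Z] [MeasurableSpace Θ]
    (μ : Measure Z) [IsProbabilityMeasure μ]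
    (β : ℝ) (hβ : 0 < β)
    (g : Z → ℝ → Θ → ℝ)
    (hg : Measurable fun p : Z × ℝ × Θ => g p.1 p.2.1 p.2.2)
    (hg01 : ∀ z θ, ∀ τ ∈ Set.Icc 0 β, g z τ θ ∈ Set.Icc (0 : ℝ) 1)
    (hgc : ∀ z θ, ContinuousOn (fun τ => g z τ θ) (Set.Icc 0 β))
    (N : ℕ) (hN : 2 ≤ N) :
    ∀ θ : Θ,
      ∫⁻ D, ENNReal.ofReal
          (Real.exp (2 * ((N : ℝ) - 1) * (RhatP μ β g θ D - RexpP μ β g N θ) ^ 2))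
          ∂(Measure.pi fun _ : Fin N => μ) ≤
        ENNReal.ofReal (2 * (N : ℝ)) :=
  exp_moment_Rhat_deviation_general μ β g hg hg01 hgc N hN
end
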